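/- Let A be a commutative unital ℂ-algebra, L ∈ Mat_m(A), and let r be an m²×m² complex matrix such that either r + PrP = 0 or r + PrP = 2P; write r₂₁ := PrP, L₁ := L⊗I_m, L₂ := I_m⊗L. Set C := r L₁ L₂ + L₁ r₂₁ L₂ − L₂ r L₁ − L₂ L₁ r₂₁. Then P·C·P = −C. (This is the skew-symmetry of the Semenov-Tian-Shansky-type Poisson bracket {L₁, L₂} = r₁₂ L₁L₂ + L₁ r₂₁ L₂ − L₂ r₁₂ L₁ − L₂L₁ r₂₁ corresponding to the reflection equation algebra, in both the involutive and the Hecke case.) -/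
import Mathlib


/-- The matrix of the flip operator `P(x ⊗ y) = y ⊗ x` on `ℂ^m ⊗ ℂ^m`. -/
def flipMat (m : ℕ) : Matrix (Fin m × Fin m) (Fin m × Fin m) ℂ :=
  Matrix.of fun p q => if p.1 = q.2 ∧ p.2 = q.1 then 1 else 0

/-- A complex `m²×m²` matrix regarded as a matrix over an algebra `A` via `algebraMap ℂ A`. -/
def matlift {m : ℕ} {A : Type*} [CommRing A] [Algebra ℂ A]
    (X : Matrix (Fin m × Fin m) (Fin m × Fin m) ℂ) :
    Matrix (Fin m × Fin m) (Fin m × Fin m) A :=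
  X.map (algebraMap ℂ A)

/-- For `L ∈ Mat_m(A)`, the Kronecker product `L₁ = L ⊗ I_m ∈ Mat_{m²}(A)`. -/
def amp1 {m : ℕ} {A : Type*} [CommRing A] (L : Matrix (Fin m) (Fin m) A) :
    Matrix (Fin m × Fin m) (Fin m × Fin m) A :=
  Matrix.of fun p q => L p.1 q.1 * (if p.2 = q.2 then 1 else 0)

/-- For `L ∈ Mat_m(A)`, the Kronecker product `L₂ = I_m ⊗ L ∈ Mat_{m²}(A)`. -/
def amp2 {m : ℕ} {A : Type*} [CommRing A] (L : Matrix (Fin m) (Fin m) A) :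
    Matrix (Fin m × Fin m) (Fin m × Fin m) A :=
  Matrix.of fun p q => (if p.1 = q.1 then 1 else 0) * L p.2 q.2

section Aux
variable {m : ℕ} {A : Type*} [CommRing A] [Algebra ℂ A] (L : Matrix (Fin m) (Fin m) A)

lemma flip_mul_flip : flipMat m * flipMat m = 1 := by
  ext ⟨i,j⟩ ⟨k,l⟩
  simp [flipMat, Matrix.mul_apply, Matrix.one_apply, Fintype.sum_prod_type,
    ite_and, Finset.sum_ite_eq, Finset.sum_ite_eq', Prod.ext_iff]

lemma matlift_mul (X Y : Matrix (Fin m × Fin m) (Fin m × Fin m) ℂ) :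
    matlift (A := A) (X * Y) = matlift X * matlift Y :=
  Matrix.map_mul

lemma matlift_add (X Y : Matrix (Fin m × Fin m) (Fin m × Fin m) ℂ) :
    matlift (A := A) (X + Y) = matlift X + matlift Y :=
  Matrix.map_add _ (map_add _) _ _

lemma matlift_one : matlift (A := A) (1 : Matrix (Fin m × Fin m) (Fin m × Fin m) ℂ) = 1 :=
  Matrix.map_one _ (map_zero _) (map_one _)

lemma matlift_zero : matlift (A := A) (0 : Matrix (Fin m × Fin m) (Fin m × Fin m) ℂ) = 0 :=
  Matrix.map_zero _ (map_zero _)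

lemma flip_amp1 : matlift (A := A) (flipMat m) * amp1 L = amp2 L * matlift (flipMat m) := by
  ext ⟨i,j⟩ ⟨k,l⟩
  simp [flipMat, matlift, amp1, amp2, Matrix.mul_apply, Fintype.sum_prod_type,
    ite_and, apply_ite, Finset.sum_ite_eq, Finset.sum_ite_eq']
  aesop

lemma flip_amp2 : matlift (A := A) (flipMat m) * amp2 L = amp1 L * matlift (flipMat m) := by
  ext ⟨i,j⟩ ⟨k,l⟩
  simp [flipMat, matlift, amp1, amp2, Matrix.mul_apply, Fintype.sum_prod_type,
    ite_and, apply_ite, Finset.sum_ite_eq, Finset.sum_ite_eq']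
  aesop

omit [Algebra ℂ A] in
lemma amp_comm : amp1 L * amp2 L = amp2 L * amp1 L := by
  ext ⟨i,j⟩ ⟨k,l⟩
  simp [amp1, amp2, Matrix.mul_apply, Fintype.sum_prod_type,
    ite_and, Finset.sum_ite_eq, Finset.sum_ite_eq', mul_comm]

end Aux

/-- Skew-symmetry of the Semenov-Tian-Shansky-type bracket for the reflection equation
algebra: if `r + PrP = 0` (involutive case) or `r + PrP = 2P` (Hecke case), then
`C = r L₁L₂ + L₁ r₂₁ L₂ − L₂ r L₁ − L₂L₁ r₂₁` (with `r₂₁ = PrP`) satisfies `PCP = −C`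
for any matrix `L` over a commutative ℂ-algebra. -/
theorem STS_bracket_skew_symmetric (m : ℕ) (hm : 1 ≤ m)
    (A : Type*) [CommRing A] [Algebra ℂ A]
    (L : Matrix (Fin m) (Fin m) A)
    (r : Matrix (Fin m × Fin m) (Fin m × Fin m) ℂ)
    (hr : r + flipMat m * r * flipMat m = 0 ∨
      r + flipMat m * r * flipMat m = (2 : ℂ) • flipMat m) :
    matlift (A := A) (flipMat m) *
        (matlift r * amp1 L * amp2 L + amp1 L * matlift (flipMat m * r * flipMat m) * amp2 L
          - amp2 L * matlift r * amp1 L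
          - amp2 L * amp1 L * matlift (flipMat m * r * flipMat m)) *
        matlift (flipMat m)
      = -(matlift r * amp1 L * amp2 L + amp1 L * matlift (flipMat m * r * flipMat m) * amp2 L
          - amp2 L * matlift r * amp1 L
          - amp2 L * amp1 L * matlift (flipMat m * r * flipMat m)) := by
  set p : Matrix (Fin m × Fin m) (Fin m × Fin m) A := matlift (flipMat m) with hp
  set ρ : Matrix (Fin m × Fin m) (Fin m × Fin m) A := matlift r with hρ
  set a : Matrix (Fin m × Fin m) (Fin m × Fin m) A := amp1 L with ha
  set b : Matrix (Fin m × Fin m) (Fin m × Fin m) A := amp2 L with hb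
  have hs : matlift (A := A) (flipMat m * r * flipMat m) = p * ρ * p := by
    rw [matlift_mul, matlift_mul]
  set s : Matrix (Fin m × Fin m) (Fin m × Fin m) A := p * ρ * p with hsdef
  rw [hs]
  have hpp : p * p = 1 := by
    rw [hp, ← matlift_mul, flip_mul_flip, matlift_one]
  have hpa : p * a = b * p := flip_amp1 L
  have hpb : p * b = a * p := flip_amp2 L
  have hab : a * b = b * a := amp_comm L
  -- p commutes with a*b
  have hpab : p * (a * b) = (a * b) * p := by
    calc p * (a * b) = (p * a) * b := by noncomm_ring
    _ = b * (p * b) := by rw [hpa]; noncomm_ring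
    _ = (b * a) * p := by rw [hpb]; noncomm_ring
    _ = (a * b) * p := by rw [hab]
  -- key commutation: (ρ + s) commutes with a * b
  have hkey : (ρ + s) * (a * b) = (a * b) * (ρ + s) := by
    rcases hr with h | h
    · have h' : ρ + s = 0 := by
        rw [hρ, hsdef, hp, ← matlift_mul, ← matlift_mul, ← matlift_add, h, matlift_zero]
      rw [h']; simp
    · have h2 : (2 : ℂ) • flipMat m = flipMat m + flipMat m := two_smul ℂ _
      have h' : ρ + s = p + p := by
        rw [hρ, hsdef, hp, ← matlift_mul, ← matlift_mul, ← matlift_add, h, h2, matlift_add]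
      rw [h', add_mul, mul_add, hpab]
  -- compute the four conjugated terms
  have t1 : p * (ρ * a * b) * p = s * (b * a) := by
    have : a * (b * p) = p * (b * a) := by
      rw [← hpa]
      calc a * (p * a) = (a * p) * a := by noncomm_ring
      _ = p * (b * a) := by rw [← hpb]; noncomm_ring
    calc p * (ρ * a * b) * p = p * ρ * (a * (b * p)) := by noncomm_ring
    _ = p * ρ * (p * (b * a)) := by rw [this]
    _ = s * (b * a) := by rw [hsdef]; noncomm_ring
  have t2 : p * (a * s * b) * p = b * ρ * a := by
    calc p * (a * s * b) * p = (p * a) * s * (b * p) := by noncomm_ring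
    _ = (b * p) * s * (p * a) := by rw [hpa]
    _ = b * (p * p) * ρ * (p * p) * a := by rw [hsdef]; noncomm_ring
    _ = b * ρ * a := by rw [hpp]; noncomm_ring
  have t3 : p * (b * ρ * a) * p = a * s * b := by
    calc p * (b * ρ * a) * p = (p * b) * ρ * (a * p) := by noncomm_ring
    _ = (a * p) * ρ * (p * b) := by rw [hpb]
    _ = a * s * b := by rw [hsdef]; noncomm_ring
  have t4 : p * (b * a * s) * p = (a * b) * ρ := by
    have h1 : p * (b * a) = (a * b) * p := by
      calc p * (b * a) = (p * b) * a := by noncomm_ring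
      _ = a * (p * a) := by rw [hpb]; noncomm_ring
      _ = (a * b) * p := by rw [hpa]; noncomm_ring
    calc p * (b * a * s) * p = (p * (b * a)) * (s * p) := by noncomm_ring
    _ = ((a * b) * p) * (p * ρ * (p * p)) := by rw [h1, hsdef]; noncomm_ring
    _ = (a * b) * (p * p) * ρ * (p * p) := by noncomm_ring
    _ = (a * b) * ρ := by rw [hpp]; noncomm_ring
  have expand : p * (ρ * a * b + a * s * b - b * ρ * a - b * a * s) * p
      = p * (ρ * a * b) * p + p * (a * s * b) * p - p * (b * ρ * a) * p - p * (b * a * s) * p := by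
    noncomm_ring
  rw [expand, t1, t2, t3, t4]
  -- goal: s*(b*a) + b*ρ*a - a*s*b - (a*b)*ρ = -(ρ*a*b + a*s*b - b*ρ*a - b*a*s)
  have final : s * (b * a) + ρ * (a * b) = (a * b) * ρ + (b * a) * s := by
    have e1 : s * (b * a) = s * (a * b) := by rw [hab]
    have e2 : (b * a) * s = (a * b) * s := by rw [hab]
    rw [e1, e2]
    have := hkey
    calc s * (a * b) + ρ * (a * b) = (ρ + s) * (a * b) := by noncomm_ring
    _ = (a * b) * (ρ + s) := hkey
    _ = (a * b) * ρ + (a * b) * s := by noncomm_ring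
  linear_combination (norm := noncomm_ring) final
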